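/- Let p : ℕ → ℝ be nonnegative with ∑'_{k} p k = 1, and let c₁, c₂ > 0 be constants such that c₁ · k^(−3/2) ≤ p k ≤ c₂ · k^(−3/2) for every k ≥ 1. Let ε be a real with 0 < ε ≤ 1 and let n ≥ 1 be an integer with ε · n ≥ 1. Then (∑'_{k} min(k, 2n) · p k) / (∑_{k : ℕ, k ≥ 1, n(1−ε) ≤ k ≤ n(1+ε)} p k) ≤ (16 · c₂ / c₁) · n / ε. -/

import Mathlib

/-!
The numerator is at most `c₂ ∑ₖ min(k, 2n) k^{-3/2} ≤ 4 c₂ √(2n)`, by comparing the sum with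
`∫ min(t, 2n) t^{-3/2} dt` through a telescoping majorant. The window contains the
`⌊εn⌋ + 1 ≥ εn` integers `n, …, n + ⌊εn⌋ ≤ 2n`, each of weight at least `c₁ (2n)^{-3/2}`.
The quotient of the two bounds is `4 c₂ (2n)² / (c₁ ε n) = 16 (c₂ / c₁) n / ε`.
-/

open Real Finset

lemma rpow_neg_three_halves {x : ℝ} (hx : 0 ≤ x) : x ^ (-(3 / 2) : ℝ) = (√x ^ 3)⁻¹ := by
  rw [sqrt_eq_rpow, ← rpow_natCast, ← rpow_mul hx, ← rpow_neg hx]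
  norm_num

lemma inv_sqrt_add_one_le {x : ℝ} (hx : 0 ≤ x) : (√(x + 1))⁻¹ ≤ 2 * (√(x + 1) - √x) := by
  have hs := sq_sqrt hx
  have ht := sq_sqrt (by linarith : 0 ≤ x + 1)
  have hst : √x ≤ √(x + 1) := sqrt_le_sqrt (by linarith)
  have ht0 : 0 < √(x + 1) := sqrt_pos.2 (by linarith)
  rw [inv_le_iff_one_le_mul₀ ht0]
  nlinarith [sqrt_nonneg x]

lemma inv_sqrt_add_one_pow_three_le {x : ℝ} (hx : 0 < x) :
    (√(x + 1) ^ 3)⁻¹ ≤ 2 * ((√x)⁻¹ - (√(x + 1))⁻¹) := by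
  have hs := sq_sqrt hx.le
  have ht := sq_sqrt (by linarith : 0 ≤ x + 1)
  have hst : √x ≤ √(x + 1) := sqrt_le_sqrt (by linarith)
  have hs0 : 0 < √x := sqrt_pos.2 hx
  have ht0 : 0 < √(x + 1) := sqrt_pos.2 (by linarith)
  rw [inv_le_iff_one_le_mul₀ (by positivity), show 2 * ((√x)⁻¹ - (√(x + 1))⁻¹) * √(x + 1) ^ 3
    = 2 * (√(x + 1) - √x) * √(x + 1) ^ 2 / √x by field_simp, le_div_iff₀ hs0]
  nlinarith

/-- `∫₀ʲ min(t, N) t^{-3/2} dt`, which dominates `∑_{k ≤ j} min(k, N) k^{-3/2}` step by step. -/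
noncomputable def truncMomentMajorant (N j : ℕ) : ℝ :=
  2 * √(min j N : ℕ) + 2 * N * ((√N)⁻¹ - (√(max j N : ℕ))⁻¹)

lemma min_mul_inv_sqrt_pow_three_le_majorant_sub (N j : ℕ) :
    (min (j + 1) N : ℕ) * (√(j + 1 : ℕ) ^ 3)⁻¹ ≤
      truncMomentMajorant N (j + 1) - truncMomentMajorant N j := by
  unfold truncMomentMajorant
  rcases le_or_gt (j + 1) N with hj | hj
  · rw [min_eq_left hj, min_eq_left (by omega), max_eq_right hj, max_eq_right (by omega)]
    push_cast
    have h : ((j : ℝ) + 1) * (√((j : ℝ) + 1) ^ 3)⁻¹ = (√((j : ℝ) + 1))⁻¹ := by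
      have ht := sq_sqrt (by positivity : (0 : ℝ) ≤ j + 1)
      have ht0 : 0 < √((j : ℝ) + 1) := sqrt_pos.2 (by positivity)
      field_simp
      rw [ht]
    linarith [inv_sqrt_add_one_le (Nat.cast_nonneg j : (0 : ℝ) ≤ j)]
  · rw [min_eq_right (by omega), min_eq_right (by omega), max_eq_left (by omega),
      max_eq_left (by omega)]
    rcases Nat.eq_zero_or_pos N with rfl | hN
    · simp
    push_cast
    have := inv_sqrt_add_one_pow_three_le (by exact_mod_cast (by omega : 0 < j) : (0 : ℝ) < j)
    nlinarith [(by exact_mod_cast hN : (0 : ℝ) < N)]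

lemma truncMomentMajorant_zero (N : ℕ) : truncMomentMajorant N 0 = 0 := by
  simp [truncMomentMajorant]

lemma truncMomentMajorant_le (N j : ℕ) : truncMomentMajorant N j ≤ 4 * √N := by
  have hmin : √(min j N : ℕ) ≤ √N := sqrt_le_sqrt (by exact_mod_cast min_le_right j N)
  have hinv : 2 * (N : ℝ) * (√N)⁻¹ = 2 * √N := by
    rcases Nat.eq_zero_or_pos N with rfl | hN
    · simp
    have := sq_sqrt (Nat.cast_nonneg N : (0 : ℝ) ≤ N)
    have : 0 < √(N : ℝ) := sqrt_pos.2 (by exact_mod_cast hN)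
    field_simp
    linarith
  have : 0 ≤ 2 * (N : ℝ) * (√(max j N : ℕ))⁻¹ := by positivity
  unfold truncMomentMajorant
  linarith

lemma sum_range_min_mul_inv_sqrt_pow_three_le (N m : ℕ) :
    ∑ k ∈ range m, (min k N : ℕ) * (√k ^ 3)⁻¹ ≤ 4 * √N := by
  cases m with
  | zero => simp
  | succ m =>
    rw [sum_range_succ']
    calc ∑ j ∈ range m, ((min (j + 1) N : ℕ) : ℝ) * (√(j + 1 : ℕ) ^ 3)⁻¹ + _
        ≤ ∑ j ∈ range m, (truncMomentMajorant N (j + 1) - truncMomentMajorant N j) + 0 := by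
          gcongr with j
          · exact min_mul_inv_sqrt_pow_three_le_majorant_sub N j
          · simp
      _ = truncMomentMajorant N m := by
          rw [sum_range_sub, truncMomentMajorant_zero]; ring
      _ ≤ 4 * √N := truncMomentMajorant_le N m

lemma tsum_min_mul_le_of_le_rpow (p : ℕ → ℝ) (hp0 : ∀ k, 0 ≤ p k) (C : ℝ)
    (hp : ∀ k : ℕ, 1 ≤ k → p k ≤ C * (k : ℝ) ^ (-(3 / 2) : ℝ)) (N : ℕ) :
    ∑' k, ((min k N : ℕ) : ℝ) * p k ≤ 4 * C * √N := by
  have hC : 0 ≤ C := by simpa using (hp0 1).trans (hp 1 le_rfl)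
  have hterm : ∀ k, ((min k N : ℕ) : ℝ) * p k ≤ C * ((min k N : ℕ) * (√k ^ 3)⁻¹) := by
    intro k
    rcases Nat.eq_zero_or_pos k with rfl | hk
    · simp
    have := hp k hk
    rw [rpow_neg_three_halves (Nat.cast_nonneg k)] at this
    nlinarith [(by positivity : (0 : ℝ) ≤ (min k N : ℕ))]
  refine Real.tsum_le_of_sum_range_le (fun k => mul_nonneg (Nat.cast_nonneg _) (hp0 k)) fun m => ?_
  calc ∑ k ∈ range m, ((min k N : ℕ) : ℝ) * p k
      ≤ C * ∑ k ∈ range m, (min k N : ℕ) * (√k ^ 3)⁻¹ := by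
        rw [mul_sum]; exact sum_le_sum fun k _ => hterm k
    _ ≤ C * (4 * √N) := by gcongr; exact sum_range_min_mul_inv_sqrt_pow_three_le N m
    _ = 4 * C * √N := by ring

lemma card_mul_le_tsum_subtype {α : Type*} {p : α → ℝ} (hp0 : ∀ a, 0 ≤ p a) (hp : Summable p)
    {S : Set α} (s : Finset α) (hs : ↑s ⊆ S) {b : ℝ} (hb : ∀ a ∈ s, b ≤ p a) :
    s.card * b ≤ ∑' a : S, p a := by
  rw [_root_.tsum_subtype]
  calc s.card * b ≤ ∑ a ∈ s, S.indicator p a := by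
        rw [← nsmul_eq_mul]
        refine card_nsmul_le_sum _ _ _ fun a ha => ?_
        rw [Set.indicator_of_mem (hs ha)]
        exact hb a ha
    _ ≤ ∑' a, S.indicator p a :=
        (hp.indicator S).sum_le_tsum _ fun a _ => Set.indicator_nonneg (fun a _ => hp0 a) a

lemma le_tsum_window_of_rpow_le (p : ℕ → ℝ) (hp0 : ∀ k, 0 ≤ p k) (hp : Summable p) (c : ℝ) (hc : 0 ≤ c)
    (hlow : ∀ k : ℕ, 1 ≤ k → c * (k : ℝ) ^ (-(3 / 2) : ℝ) ≤ p k)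
    (ε : ℝ) (hε0 : 0 ≤ ε) (hε1 : ε ≤ 1) (n : ℕ) (hn : 1 ≤ n) :
    ε * n * (c * (√(2 * n) ^ 3)⁻¹) ≤
      ∑' k : {k : ℕ // 1 ≤ k ∧ (n : ℝ) * (1 - ε) ≤ k ∧ (k : ℝ) ≤ n * (1 + ε)}, p k := by
  set t := ⌊ε * n⌋₊
  have ht : (t : ℝ) ≤ ε * n := Nat.floor_le (by positivity)
  have hwin : ↑(Icc n (n + t)) ⊆
      {k : ℕ | 1 ≤ k ∧ (n : ℝ) * (1 - ε) ≤ k ∧ (k : ℝ) ≤ n * (1 + ε)} := by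
    intro k hk
    simp only [coe_Icc, Set.mem_Icc] at hk
    have h1 : (n : ℝ) ≤ k := by exact_mod_cast hk.1
    have h2 : (k : ℝ) ≤ n + t := by exact_mod_cast hk.2
    exact ⟨hn.trans hk.1, by nlinarith, by nlinarith⟩
  have hbound : ∀ k ∈ Icc n (n + t), c * (√(2 * n) ^ 3)⁻¹ ≤ p k := by
    intro k hk
    rw [mem_Icc] at hk
    have hk1 : 1 ≤ k := hn.trans hk.1
    have hk2 : (k : ℝ) ≤ 2 * n := by
      have : (k : ℝ) ≤ n + t := by exact_mod_cast hk.2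
      nlinarith
    have hk0 : (0 : ℝ) < k := by exact_mod_cast hk1
    refine le_trans ?_ (hlow k hk1)
    rw [rpow_neg_three_halves hk0.le]
    gcongr
  calc ε * n * (c * (√(2 * n) ^ 3)⁻¹) ≤ (Icc n (n + t)).card * (c * (√(2 * n) ^ 3)⁻¹) := by
        rw [Nat.card_Icc, show n + t + 1 - n = t + 1 by omega, Nat.cast_add_one]
        gcongr
        exact (Nat.lt_floor_add_one _).le
    _ ≤ _ := card_mul_le_tsum_subtype hp0 hp _ hwin hbound

theorem stmt_14_general (p : ℕ → ℝ) (hnn : ∀ k, 0 ≤ p k) (hsum : ∑' k, p k = 1)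
    (c₁ c₂ : ℝ) (hc₁ : 0 < c₁) (hc₂ : 0 < c₂)
    (hbounds : ∀ k : ℕ, 1 ≤ k →
      c₁ * (k : ℝ) ^ (-(3 / 2) : ℝ) ≤ p k ∧ p k ≤ c₂ * (k : ℝ) ^ (-(3 / 2) : ℝ))
    (ε : ℝ) (hε0 : 0 < ε) (hε1 : ε ≤ 1)
    (n : ℕ) (hn : 1 ≤ n) :
    (∑' k : ℕ, ((min k (2 * n) : ℕ) : ℝ) * p k) /
        (∑' k : {k : ℕ // 1 ≤ k ∧ (n : ℝ) * (1 - ε) ≤ (k : ℝ) ∧ (k : ℝ) ≤ (n : ℝ) * (1 + ε)},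
          p (k : ℕ))
      ≤ (16 * c₂ / c₁) * (n : ℝ) / ε := by
  have hp : Summable p := by
    by_contra h
    simp [tsum_eq_zero_of_not_summable h] at hsum
  have hnum := tsum_min_mul_le_of_le_rpow p hnn c₂ (fun k hk => (hbounds k hk).2) (2 * n)
  have hden := le_tsum_window_of_rpow_le p hnn hp c₁ hc₁.le (fun k hk => (hbounds k hk).1) ε hε0.le hε1 n hn
  have hn0 : (0 : ℝ) < n := by exact_mod_cast hn
  have hr : √(2 * n : ℝ) ^ 2 = 2 * n := sq_sqrt (by positivity)
  have hr0 : 0 < √(2 * n : ℝ) := sqrt_pos.2 (by positivity)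
  rw [Nat.cast_mul, Nat.cast_ofNat] at hnum
  calc _ ≤ 4 * c₂ * √(2 * n : ℝ) / (ε * n * (c₁ * (√(2 * n) ^ 3)⁻¹)) :=
        div_le_div₀ (by positivity) hnum (by positivity) hden
    _ = 4 * c₂ * (√(2 * n : ℝ) ^ 2) ^ 2 / (ε * n * c₁) := by field_simp
    _ = (16 * c₂ / c₁) * n / ε := by rw [hr]; field_simp; ring

/-- Quantitative approximate-size sampling (Duchon et al.): with
`c₁ k^{-3/2} ≤ p k ≤ c₂ k^{-3/2}`, the expected total cost of the
approximate-size rejection sampler with tolerance `ε`, namely the expected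
cost of one attempt (aborted above size `2n`) divided by the probability of
landing in the window `[n(1-ε), n(1+ε)]`, is at most `(16 c₂ / c₁) n / ε`. -/
theorem stmt_14 (p : ℕ → ℝ) (hnn : ∀ k, 0 ≤ p k) (hsum : ∑' k, p k = 1)
    (c₁ c₂ : ℝ) (hc₁ : 0 < c₁) (hc₂ : 0 < c₂)
    (hbounds : ∀ k : ℕ, 1 ≤ k →
      c₁ * (k : ℝ) ^ (-(3 / 2) : ℝ) ≤ p k ∧ p k ≤ c₂ * (k : ℝ) ^ (-(3 / 2) : ℝ))
    (ε : ℝ) (hε0 : 0 < ε) (hε1 : ε ≤ 1)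
    (n : ℕ) (hn : 1 ≤ n) (hεn : 1 ≤ ε * n) :
    (∑' k : ℕ, ((min k (2 * n) : ℕ) : ℝ) * p k) /
        (∑' k : {k : ℕ // 1 ≤ k ∧ (n : ℝ) * (1 - ε) ≤ (k : ℝ) ∧ (k : ℝ) ≤ (n : ℝ) * (1 + ε)},
          p (k : ℕ))
      ≤ (16 * c₂ / c₁) * (n : ℝ) / ε :=
  stmt_14_general p hnn hsum c₁ c₂ hc₁ hc₂ hbounds ε hε0 hε1 n hn
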